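/- arXiv:2512.09507 — 2 statements merged into one kernel-verified Lean document; each statement's English description precedes it below -/
import Mathlib

section
/- Let $n > 1$ be an integer and $\delta \in (0, 1/2)$. Then there exists an $n \times n$ complex matrix $A$ with strictly positive entries whose columns each sum to $1$, such that the operator norm of $A$ (as an operator on $\ell^2$ of $n$ points) satisfies $\|A\| > \sqrt{n} - \delta$. -/
/-!
Put almost all the mass of every column into one row `i₀`. The all-ones vector, of norm `√n`,
is then sent to a vector whose `i₀`-th coordinate is close to `n`, so the operator norm is
close to `n / √n = √n`.
-/

open scoped ComplexOrder

namespace Matrix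

variable {𝕜 ι : Type*} [RCLike 𝕜] [Fintype ι] [DecidableEq ι]

theorem norm_sum_row_le_sqrt_card_mul_norm_toEuclideanCLM (A : Matrix ι ι 𝕜) (i : ι) :
    ‖∑ j, A i j‖ ≤ √(Fintype.card ι) * ‖toEuclideanCLM (𝕜 := 𝕜) A‖ := by
  set x : EuclideanSpace 𝕜 ι := WithLp.toLp 2 fun _ => 1
  have hx : ‖x‖ = √(Fintype.card ι) := by
    simp [x, EuclideanSpace.norm_eq, Finset.card_univ]
  have hAx : toEuclideanCLM (𝕜 := 𝕜) A x i = ∑ j, A i j := by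
    simp [x, mulVec, dotProduct]
  calc ‖∑ j, A i j‖ = ‖toEuclideanCLM (𝕜 := 𝕜) A x i‖ := by rw [hAx]
    _ ≤ ‖toEuclideanCLM (𝕜 := 𝕜) A x‖ := PiLp.norm_apply_le _ i
    _ ≤ ‖toEuclideanCLM (𝕜 := 𝕜) A‖ * ‖x‖ := (toEuclideanCLM (𝕜 := 𝕜) A).le_opNorm x
    _ = √(Fintype.card ι) * ‖toEuclideanCLM (𝕜 := 𝕜) A‖ := by rw [hx, mul_comm]

variable (ι) in
noncomputable def rowConcentrated (ε : ℝ) (i₀ : ι) : Matrix ι ι ℂ :=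
  of fun i _ => ((if i = i₀ then 1 - (Fintype.card ι - 1) * ε else ε : ℝ) : ℂ)

theorem rowConcentrated_pos {ε : ℝ} (hε : 0 < ε) (hε' : (Fintype.card ι - 1) * ε < 1)
    (i₀ i j : ι) : 0 < rowConcentrated ι ε i₀ i j := by
  rw [rowConcentrated, of_apply, Complex.zero_lt_real]
  split_ifs <;> linarith

theorem sum_rowConcentrated_col (ε : ℝ) (i₀ j : ι) :
    ∑ i, rowConcentrated ι ε i₀ i j = 1 := by
  have hcard : 1 ≤ Fintype.card ι := Fintype.card_pos_iff.2 ⟨i₀⟩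
  simp only [rowConcentrated, of_apply, ← Complex.ofReal_sum, Complex.ofReal_eq_one]
  simp [Finset.sum_ite, Finset.filter_eq', Finset.filter_ne', Finset.card_erase_of_mem,
    Nat.cast_sub hcard]

theorem sum_rowConcentrated_row (ε : ℝ) (i₀ : ι) :
    ∑ j, rowConcentrated ι ε i₀ i₀ j =
      ((Fintype.card ι * (1 - (Fintype.card ι - 1) * ε) : ℝ) : ℂ) := by
  simp only [rowConcentrated, of_apply, if_true, Finset.sum_const, Finset.card_univ,
    nsmul_eq_mul]
  push_cast
  rfl

theorem sqrt_card_mul_le_norm_toEuclideanCLM_rowConcentrated (ε : ℝ) (i₀ : ι) :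
    √(Fintype.card ι) * (1 - (Fintype.card ι - 1) * ε) ≤
      ‖toEuclideanCLM (𝕜 := ℂ) (rowConcentrated ι ε i₀)‖ := by
  have hcard : 0 < √(Fintype.card ι) :=
    Real.sqrt_pos.2 (by exact_mod_cast Fintype.card_pos_iff.2 ⟨i₀⟩)
  have h := norm_sum_row_le_sqrt_card_mul_norm_toEuclideanCLM (rowConcentrated ι ε i₀) i₀
  rw [sum_rowConcentrated_row, Complex.norm_real, Real.norm_eq_abs] at h
  refine le_of_mul_le_mul_left ?_ hcard
  rw [← mul_assoc, Real.mul_self_sqrt (Nat.cast_nonneg _)]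
  exact (le_abs_self _).trans h

end Matrix

open Matrix in
theorem stmt_0 (n : ℕ) (hn : 1 < n) (δ : ℝ) (hδ : δ ∈ Set.Ioo (0:ℝ) (1/2)) :
    ∃ A : Matrix (Fin n) (Fin n) ℂ,
      (∀ i j, 0 < A i j) ∧
      (∀ j, ∑ i, A i j = 1) ∧
      Real.sqrt n - δ < ‖Matrix.toEuclideanCLM (𝕜 := ℂ) A‖ := by
  obtain ⟨hδ0, hδ2⟩ := hδ
  have hn' : (1 : ℝ) < n := by exact_mod_cast hn
  set ε := δ / n ^ 2
  have hε : 0 < ε := by positivity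
  have hsmall : √n * (n - 1) * ε < δ :=
    calc √n * (n - 1) * ε < n * n * ε := by
          refine mul_lt_mul_of_pos_right ?_ hε
          exact mul_lt_mul'' (Real.sqrt_lt_self_iff.2 hn') (sub_lt_self _ one_pos)
            (Real.sqrt_nonneg _) (sub_nonneg.2 hn'.le)
      _ = δ := by simp only [ε]; field_simp
  have hε' : ((n : ℝ) - 1) * ε < 1 := by nlinarith [Real.one_le_sqrt.2 hn'.le]
  let i₀ : Fin n := ⟨0, by omega⟩
  refine ⟨rowConcentrated (Fin n) ε i₀, rowConcentrated_pos hε (by simpa using hε') i₀,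
    sum_rowConcentrated_col ε i₀, ?_⟩
  have hnorm := sqrt_card_mul_le_norm_toEuclideanCLM_rowConcentrated ε i₀
  rw [Fintype.card_fin] at hnorm
  linarith
end

section
/- Define $\pi : \mathbb{N} \times \mathbb{N} \to \{0,1\}$ by $\pi(m,n) = 1$ iff $n \in I_m$ where $I_k = \mathbb{N} \cap [\frac{k(k+1)}{2}, \frac{(k+1)(k+2)}{2})$. For each $k$, let $\xi_k \in \ell^2(\mathbb{N} \times \mathbb{N})$ be given by $\xi_k(m,n) = \pi(k,n)$ if $m = k$ and $0$ otherwise, and let $(P^\pi \xi)(m,n) = \sum_{a \in \mathbb{N}} \xi(m,a)\,\pi(n,a)$. Then $\|\xi_k\|_2^2 = k+1$ and $\|P^\pi \xi_k\|_2^2 = (k+1)^2$, so $\sup_k \|P^\pi \xi_k\|_2 / \|\xi_k\|_2 = \infty$; hence $P^\pi$ is not a bounded operator on $\ell^2(\mathbb{N} \times \mathbb{N})$. -/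
theorem stmt_6 (I : ℕ → Finset ℕ)
    (hI : ∀ k, I k = Finset.Ico (k * (k + 1) / 2) ((k + 1) * (k + 2) / 2))
    (π : ℕ → ℕ → ℝ) (hπ : ∀ m n, π m n = if n ∈ I m then 1 else 0)
    (ξ : ℕ → ℕ × ℕ → ℝ)
    (hξ : ∀ k m n, ξ k (m, n) = if m = k then π k n else 0)
    (Pξ : ℕ → ℕ × ℕ → ℝ)
    (hPξ : ∀ k m n, Pξ k (m, n) = ∑' a, ξ k (m, a) * π n a) :
    (∀ k, ∑' p, (ξ k p)^2 = (k : ℝ) + 1) ∧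
    (∀ k, ∑' p, (Pξ k p)^2 = ((k : ℝ) + 1)^2) ∧
    ¬ ∃ C : ℝ, ∀ k, Real.sqrt (∑' p, (Pξ k p)^2) ≤ C * Real.sqrt (∑' p, (ξ k p)^2) := by
  have hcard : ∀ k, (I k).card = k + 1 := by
    intro k
    rw [hI, Nat.card_Ico]
    have h2 : (k+1)*(k+2) = k*(k+1) + (k+1)*2 := by ring
    rw [h2, Nat.add_mul_div_right _ _ (by norm_num : 0 < (2:ℕ))]
    omega
  have key : ∀ k n : ℕ, k < n → (k+1)*(k+2)/2 ≤ n*(n+1)/2 := by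
    intro k n h
    exact Nat.div_le_div_right (Nat.mul_le_mul (by omega) (by omega))
  have hdisj : ∀ k n : ℕ, k ≠ n → I k ∩ I n = ∅ := by
    intro k n hkn
    ext x
    simp only [hI, Finset.mem_inter, Finset.mem_Ico, Finset.notMem_empty, iff_false]
    rintro ⟨⟨h1, h2⟩, h3, h4⟩
    rcases hkn.lt_or_gt with h | h
    · exact absurd (lt_of_lt_of_le h2 ((key k n h).trans h3)) (lt_irrefl x)
    · exact absurd (lt_of_lt_of_le h4 ((key n k h).trans h1)) (lt_irrefl x)
  have hξ' : ∀ k m n, ξ k (m, n) = if m = k ∧ n ∈ I k then 1 else 0 := by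
    intro k m n
    rw [hξ, hπ]
    by_cases h : m = k <;> simp [h]
  have part1 : ∀ k, ∑' p, (ξ k p)^2 = (k : ℝ) + 1 := by
    intro k
    rw [tsum_eq_sum (s := ({k} : Finset ℕ) ×ˢ I k) ?_]
    · have hone : ∀ p ∈ (({k} : Finset ℕ) ×ˢ I k), (ξ k p)^2 = 1 := by
        rintro ⟨m, n⟩ hp
        simp only [Finset.mem_product, Finset.mem_singleton] at hp
        rw [hξ' k m n, if_pos ⟨hp.1, hp.2⟩]; norm_num
      rw [Finset.sum_congr rfl hone, Finset.sum_const, Finset.card_product,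
          Finset.card_singleton, one_mul, hcard, nsmul_eq_mul]
      push_cast; ring
    · rintro ⟨m, n⟩ hp
      simp only [Finset.mem_product, Finset.mem_singleton, not_and] at hp
      rw [hξ' k m n, if_neg (fun h => hp h.1 h.2)]
      norm_num
  have hPξ' : ∀ k m n, Pξ k (m, n) = if m = k ∧ n = k then (k : ℝ) + 1 else 0 := by
    intro k m n
    rw [hPξ]
    by_cases hm : m = k
    · subst hm
      have hterm : ∀ a, ξ m (m, a) * π n a = if a ∈ I m ∩ I n then (1 : ℝ) else 0 := by
        intro a
        rw [hξ' m m a, hπ]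
        by_cases h1 : a ∈ I m <;> by_cases h2 : a ∈ I n <;>
          simp [h1, h2, Finset.mem_inter]
      simp only [hterm]
      rw [tsum_eq_sum (s := I m ∩ I n) (fun a ha => if_neg ha)]
      have hone : ∀ a ∈ I m ∩ I n, (if a ∈ I m ∩ I n then (1:ℝ) else 0) = 1 :=
        fun a ha => if_pos ha
      rw [Finset.sum_congr rfl hone, Finset.sum_const, nsmul_eq_mul, mul_one]
      by_cases hn : n = m
      · subst hn
        rw [Finset.inter_self, hcard]
        simp
      · rw [hdisj m n (fun h => hn h.symm)]
        simp [hn]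
    · have hz : ∀ a, ξ k (m, a) * π n a = 0 := by
        intro a
        rw [hξ' k m a, if_neg (fun h => hm h.1), zero_mul]
      simp only [hz]
      rw [tsum_zero, if_neg (fun h => hm h.1)]
  have part2 : ∀ k, ∑' p, (Pξ k p)^2 = ((k : ℝ) + 1)^2 := by
    intro k
    have hz : ∀ p : ℕ × ℕ, p ≠ (k, k) → (Pξ k p)^2 = 0 := by
      rintro ⟨m, n⟩ hne
      rw [hPξ' k m n, if_neg (by rintro ⟨rfl, rfl⟩; exact hne rfl)]
      norm_num
    rw [tsum_eq_single ((k, k) : ℕ × ℕ) hz, hPξ' k k k, if_pos ⟨rfl, rfl⟩]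
  refine ⟨part1, part2, ?_⟩
  rintro ⟨C, hC⟩
  obtain ⟨k, hk⟩ := exists_nat_gt (C^2)
  have h1 := hC k
  rw [part1 k, part2 k] at h1
  have hpos : (0:ℝ) ≤ (k:ℝ) + 1 := by positivity
  rw [Real.sqrt_sq hpos] at h1
  have hs2 : Real.sqrt ((k:ℝ)+1) ^ 2 = (k:ℝ)+1 := Real.sq_sqrt hpos
  have hs3 : (0:ℝ) ≤ Real.sqrt ((k:ℝ)+1) := Real.sqrt_nonneg _
  nlinarith [mul_self_le_mul_self hpos h1, hs2, hs3, hk]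
end
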